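/- arXiv:math/0701900 — 2 statements merged into one kernel-verified Lean document; each statement's English description precedes it below -/
import Mathlib

section
/- Let χ_e ∈ H¹(Tⁿ) be the mean-zero solution of the cell problem -Δχ_e + A u·∇χ_e = A u·e, and define the effective diffusivity D_e(A) = 1 + ∫_{Tⁿ}|∇χ_e|² dx. If the equation u·∇φ_e = u·e admits a solution φ_e ∈ H¹(Tⁿ), then D_e(A) ≤ 1 + 4‖∇φ_e‖²_{L²(Tⁿ)} for all A ∈ ℝ; in particular sup_A D_e(A) < ∞. -/
/-! Test the cell equation `-Δχ + A u·∇χ = A u·∇φ` against `χ` and against `φ`. Since `div u = 0`,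
the transport term is skew on the torus, `∫ f (u·∇g) = -∫ g (u·∇f)`, so both tests give
`A ∫ χ (u·∇φ)`. Hence `‖∇χ‖² = ⟪∇φ, ∇χ⟫ ≤ ‖∇φ‖ ‖∇χ‖` in `L²(Tⁿ)`, uniformly in `A`.
Every integration by parts on the torus reduces to `∫_{[0,1]ⁿ} ∂_w v = 0` for Lipschitz periodic
`v`: the difference quotients of `v` have zero mean by translation invariance, and they converge
a.e. (Rademacher) under a uniform bound. -/

open MeasureTheory Real Filter
open scoped RealInnerProductSpace ENNReal

noncomputable section

/-- The unit periodicity cell `[0,1]ⁿ` of the torus `Tⁿ`. -/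
def cube (n : ℕ) : Set (EuclideanSpace ℝ (Fin n)) :=
  {x | ∀ i, x i ∈ Set.Icc (0 : ℝ) 1}

/-- The Laplacian of a scalar function on `ℝⁿ`. -/
def lap {n : ℕ} (f : EuclideanSpace ℝ (Fin n) → ℝ) (x : EuclideanSpace ℝ (Fin n)) : ℝ :=
  ∑ i, ⟪fderiv ℝ (gradient f) x (EuclideanSpace.single i 1), EuclideanSpace.single i 1⟫

/-- The divergence of a vector field on `ℝⁿ`. -/
def divg {n : ℕ} (u : EuclideanSpace ℝ (Fin n) → EuclideanSpace ℝ (Fin n))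
    (x : EuclideanSpace ℝ (Fin n)) : ℝ :=
  ∑ i, fderiv ℝ u x (EuclideanSpace.single i 1) i

open Submodule

abbrev Eu (n : ℕ) := EuclideanSpace ℝ (Fin n)

def stdBasis (n : ℕ) : Module.Basis (Fin n) ℝ (Eu n) :=
  (EuclideanSpace.basisFun (Fin n) ℝ).toBasis

def IsUnitPeriodic {α : Type*} {n : ℕ} (v : Eu n → α) : Prop :=
  ∀ x i, v (x + EuclideanSpace.single i 1) = v x

section Lattice

variable {n : ℕ}

instance : VAddInvariantMeasure (span ℤ (Set.range (stdBasis n))) (Eu n) volume :=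
  ⟨fun c s _ => measure_preimage_add volume (c : Eu n) s⟩

instance : MeasurableVAdd (span ℤ (Set.range (stdBasis n))) (Eu n) where
  measurable_const_vadd c := measurable_id.const_add (c : Eu n)
  measurable_vadd_const x := measurable_subtype_coe.add_const x

lemma stdBasis_apply (i : Fin n) : stdBasis n i = EuclideanSpace.single i 1 := by
  simp [stdBasis, EuclideanSpace.basisFun_apply]

lemma fundamentalDomain_stdBasis :
    ZSpan.fundamentalDomain (stdBasis n) = WithLp.ofLp ⁻¹' Set.univ.pi fun _ => Set.Ico 0 1 := by
  ext x
  simp [ZSpan.fundamentalDomain, stdBasis]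

lemma cube_eq_preimage : cube n = WithLp.ofLp ⁻¹' Set.Icc 0 1 := by
  ext x
  simp [cube, Pi.le_def, forall_and]

lemma isCompact_cube : IsCompact (cube n) := by
  rw [cube_eq_preimage]
  exact (PiLp.continuousLinearEquiv 2 ℝ _).toHomeomorph.isCompact_preimage.2 isCompact_Icc

lemma measurableSet_cube : MeasurableSet (cube n) :=
  isCompact_cube.isClosed.measurableSet

instance : IsFiniteMeasure (volume.restrict (cube n)) :=
  isFiniteMeasure_restrict.2 isCompact_cube.measure_ne_top

lemma Continuous.integrableOn_cube {E : Type*} [NormedAddCommGroup E] {f : Eu n → E}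
    (hf : Continuous f) : IntegrableOn f (cube n) :=
  hf.continuousOn.integrableOn_compact isCompact_cube

lemma cube_ae_eq_fundamentalDomain :
    cube n =ᵐ[volume] ZSpan.fundamentalDomain (stdBasis n) := by
  rw [cube_eq_preimage, fundamentalDomain_stdBasis]
  exact ((PiLp.volume_preserving_ofLp _).quasiMeasurePreserving.preimage_ae_eq
    Measure.univ_pi_Ico_ae_eq_Icc).symm

lemma exists_mem_cube_add (x : Eu n) :
    ∃ y ∈ cube n, ∃ g ∈ span ℤ (Set.range (stdBasis n)), x = y + g := by
  refine ⟨ZSpan.fract (stdBasis n) x, ?_, ZSpan.floor (stdBasis n) x, (ZSpan.floor _ x).2, ?_⟩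
  · rw [cube_eq_preimage]
    have := fundamentalDomain_stdBasis ▸ ZSpan.fract_mem_fundamentalDomain (stdBasis n) x
    exact ⟨fun i => (this i trivial).1, fun i => (this i trivial).2.le⟩
  · rw [ZSpan.fract, sub_add_cancel]

end Lattice

namespace IsUnitPeriodic

variable {n : ℕ} {E : Type*} [NormedAddCommGroup E] [NormedSpace ℝ E]

lemma add_mem_span {α : Type*} {v : Eu n → α} (hv : IsUnitPeriodic v) {g : Eu n}
    (hg : g ∈ span ℤ (Set.range (stdBasis n))) (x : Eu n) : v (x + g) = v x := by
  let periods : AddSubgroup (Eu n) :=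
    { carrier := {g | ∀ x, v (x + g) = v x}
      zero_mem' := by simp
      add_mem' := fun {a b} ha hb x => by rw [← add_assoc, hb, ha]
      neg_mem' := fun {a} ha x => by rw [← ha (x + -a), neg_add_cancel_right] }
  have : span ℤ (Set.range (stdBasis n)) ≤ AddSubgroup.toIntSubmodule periods := by
    refine span_le.2 ?_
    rintro _ ⟨i, rfl⟩ x
    rw [stdBasis_apply]
    exact hv x i
  exact this hg x

lemma comp {α β : Type*} {v : Eu n → α} (hv : IsUnitPeriodic v) (f : α → β) :
    IsUnitPeriodic (f ∘ v) := fun x i => by simp only [Function.comp_apply, hv x i]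

lemma mul {f g : Eu n → ℝ} (hf : IsUnitPeriodic f) (hg : IsUnitPeriodic g) :
    IsUnitPeriodic (fun x => f x * g x) := fun x i => by simp only [hf x i, hg x i]

lemma smul {f : Eu n → ℝ} {v : Eu n → E} (hf : IsUnitPeriodic f) (hv : IsUnitPeriodic v) :
    IsUnitPeriodic (fun x => f x • v x) := fun x i => by simp only [hf x i, hv x i]

lemma fderiv {v : Eu n → E} (hv : IsUnitPeriodic v) : IsUnitPeriodic (fderiv ℝ v) := fun x i => by
  rw [← fderiv_comp_add_right]
  exact congrArg (_root_.fderiv ℝ · x) (funext fun y => hv y i)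

lemma gradient {f : Eu n → ℝ} (hf : IsUnitPeriodic f) : IsUnitPeriodic (gradient f) :=
  hf.fderiv.comp (InnerProductSpace.toDual ℝ (Eu n)).symm

lemma setIntegral_cube_comp_add {v : Eu n → E} (hv : IsUnitPeriodic v) (c : Eu n) :
    ∫ x in cube n, v (x + c) = ∫ x in cube n, v x := by
  have hFD := ZSpan.isAddFundamentalDomain (stdBasis n) (volume : Measure (Eu n))
  have hFDc : IsAddFundamentalDomain (span ℤ (Set.range (stdBasis n)))
      ((· + c) '' ZSpan.fundamentalDomain (stdBasis n)) volume := by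
    refine hFD.image_of_equiv (Equiv.addRight c) ?_ (Equiv.refl _) fun g x => ?_
    · simpa using (measurePreserving_add_right volume (-c)).quasiMeasurePreserving
    · exact add_assoc (g : Eu n) x c
  calc ∫ x in cube n, v (x + c) = ∫ x in ZSpan.fundamentalDomain (stdBasis n), v (x + c) :=
        setIntegral_congr_set cube_ae_eq_fundamentalDomain
    _ = ∫ y in (· + c) '' ZSpan.fundamentalDomain (stdBasis n), v y :=
        ((measurePreserving_add_right volume c).setIntegral_image_emb
          (measurableEmbedding_addRight c) v _).symm
    _ = ∫ y in ZSpan.fundamentalDomain (stdBasis n), v y :=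
        hFDc.setIntegral_eq hFD fun g x => (add_comm x g ▸ hv.add_mem_span g.2 x :)
    _ = ∫ x in cube n, v x := (setIntegral_congr_set cube_ae_eq_fundamentalDomain).symm

lemma exists_bound {F : Type*} [NormedAddCommGroup F] {v : Eu n → F} (hv : IsUnitPeriodic v)
    (hc : Continuous v) : ∃ C, ∀ x, ‖v x‖ ≤ C := by
  obtain ⟨C, hC⟩ := isCompact_cube.exists_bound_of_continuousOn hc.continuousOn
  refine ⟨C, fun x => ?_⟩
  obtain ⟨y, hy, g, hg, rfl⟩ := exists_mem_cube_add x
  rw [hv.add_mem_span hg]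
  exact hC y hy

lemma exists_lipschitzWith {v : Eu n → E} (hv : IsUnitPeriodic v) (hv' : ContDiff ℝ 1 v) :
    ∃ K, LipschitzWith K v := by
  obtain ⟨C, hC⟩ := hv.fderiv.exists_bound (hv'.continuous_fderiv one_ne_zero)
  refine ⟨C.toNNReal, lipschitzWith_of_nnnorm_fderiv_le (hv'.differentiable one_ne_zero)
    fun x => ?_⟩
  rw [← NNReal.coe_le_coe, coe_nnnorm]
  exact (hC x).trans (le_max_left C 0)

end IsUnitPeriodic

lemma LipschitzWith.smul_of_bounded {α E : Type*} [PseudoMetricSpace α] [NormedAddCommGroup E]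
    [NormedSpace ℝ E] {f : α → ℝ} {v : α → E} {Kf Kv : NNReal} {Cf Cv : ℝ}
    (hf : LipschitzWith Kf f) (hv : LipschitzWith Kv v)
    (hCf : ∀ x, ‖f x‖ ≤ Cf) (hCv : ∀ x, ‖v x‖ ≤ Cv) :
    LipschitzWith (Cf * Kv + Cv * Kf).toNNReal fun x => f x • v x := by
  refine LipschitzWith.of_dist_le' fun x y => ?_
  rw [dist_eq_norm, show f x • v x - f y • v y = f x • (v x - v y) + (f x - f y) • v y by
    simp only [smul_sub, sub_smul]; abel]
  calc ‖f x • (v x - v y) + (f x - f y) • v y‖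
      ≤ ‖f x‖ * ‖v x - v y‖ + ‖f x - f y‖ * ‖v y‖ := by
        grw [norm_add_le, norm_smul, norm_smul]
    _ ≤ Cf * (Kv * dist x y) + (Kf * dist x y) * Cv := by
        rw [← dist_eq_norm, ← dist_eq_norm]
        gcongr
        · exact (norm_nonneg _).trans (hCf x)
        · exact hCf x
        · exact hv.dist_le_mul x y
        · exact hf.dist_le_mul x y
        · exact hCv y
    _ = (Cf * Kv + Cv * Kf) * dist x y := by ring

section Calculus

variable {n : ℕ}

lemma gradient_eq_toDual_symm_fderiv (f : Eu n → ℝ) :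
    gradient f = (InnerProductSpace.toDual ℝ (Eu n)).symm ∘ fderiv ℝ f := rfl

lemma ContDiff.gradient {f : Eu n → ℝ} {k : WithTop ℕ∞} (hf : ContDiff ℝ (k + 1) f) :
    ContDiff ℝ k (gradient f) := by
  rw [gradient_eq_toDual_symm_fderiv]
  exact (InnerProductSpace.toDual ℝ (Eu n)).symm.contDiff.comp (hf.fderiv_right le_rfl)

lemma lap_eq_divg_gradient (f : Eu n → ℝ) : lap f = divg (gradient f) := by
  ext x
  simp [lap, divg, EuclideanSpace.inner_single_right]

lemma divg_smul {f : Eu n → ℝ} {v : Eu n → Eu n} {x : Eu n} (hf : DifferentiableAt ℝ f x)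
    (hv : DifferentiableAt ℝ v x) :
    divg (fun y => f y • v y) x = fderiv ℝ f x (v x) + f x * divg v x := by
  conv_lhs => rw [divg, fderiv_fun_smul hf hv]
  conv_rhs => rw [← (EuclideanSpace.basisFun (Fin n) ℝ).sum_repr (v x)]
  simp [divg, Finset.sum_add_distrib, Finset.mul_sum, mul_comm, add_comm]

lemma continuous_divg {v : Eu n → Eu n} (hv : ContDiff ℝ 1 v) : Continuous (divg v) := by
  have := hv.continuous_fderiv one_ne_zero
  unfold divg
  fun_prop

end Calculus

section Torus

variable {n : ℕ}

lemma integral_cube_fderiv_apply_eq_zero {E : Type*} [NormedAddCommGroup E] [NormedSpace ℝ E]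
    [FiniteDimensional ℝ E] {v : Eu n → E} {K : NNReal} (hv : IsUnitPeriodic v)
    (hlip : LipschitzWith K v) (w : Eu n) : ∫ x in cube n, fderiv ℝ v x w = 0 := by
  have hvc := hlip.continuous
  let q (t : ℝ) (x : Eu n) : E := t • (v (x + t⁻¹ • w) - v x)
  have hq_cont (t : ℝ) : Continuous (q t) := by fun_prop
  have hq_int (t : ℝ) : ∫ x in cube n, q t x = 0 := by
    rw [integral_smul, integral_sub, hv.setIntegral_cube_comp_add, sub_self, smul_zero]
    all_goals exact Continuous.integrableOn_cube (by fun_prop)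
  have hq_bound : ∀ᶠ t in atTop, ∀ x, ‖q t x‖ ≤ K * ‖w‖ := by
    filter_upwards [eventually_gt_atTop 0] with t ht x
    calc ‖q t x‖ = t * ‖v (x + t⁻¹ • w) - v x‖ := by rw [norm_smul, norm_of_nonneg ht.le]
      _ ≤ t * (K * ‖t⁻¹ • w‖) := by grw [hlip.norm_sub_le, add_sub_cancel_left]
      _ = K * ‖w‖ := by rw [norm_smul, norm_inv, norm_of_nonneg ht.le]; field_simp
  have hlim := tendsto_integral_filter_of_dominated_convergence (μ := volume.restrict (cube n))
    (fun _ => (K : ℝ) * ‖w‖) (.of_forall fun t => (hq_cont t).aestronglyMeasurable)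
    (hq_bound.mono fun t ht => .of_forall ht) (integrable_const _)
    (ae_restrict_of_ae (hlip.ae_differentiableAt.mono fun x hx => hx.hasFDerivAt.lim_real w))
  simp only [hq_int] at hlim
  exact tendsto_nhds_unique hlim tendsto_const_nhds

lemma integral_cube_divg_eq_zero {v : Eu n → Eu n} {K : NNReal} (hv : IsUnitPeriodic v)
    (hlip : LipschitzWith K v) : ∫ x in cube n, divg v x = 0 := by
  have hint (i : Fin n) : IntegrableOn (fun x => fderiv ℝ v x (EuclideanSpace.single i 1))
      (cube n) := by
    refine (integrable_const ((K : ℝ) * ‖EuclideanSpace.single i (1 : ℝ)‖)).mono'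
      (measurable_fderiv_apply_const ℝ v _).aestronglyMeasurable (.of_forall fun x => ?_)
    exact (fderiv ℝ v x).le_of_opNorm_le (norm_fderiv_le_of_lipschitz ℝ hlip) _
  simp only [divg]
  rw [integral_finsetSum]
  · refine Finset.sum_eq_zero fun i _ => ?_
    have := (EuclideanSpace.proj i : Eu n →L[ℝ] ℝ).integral_comp_comm (hint i)
    rwa [integral_cube_fderiv_apply_eq_zero hv hlip, map_zero] at this
  · exact fun i _ => (EuclideanSpace.proj i : Eu n →L[ℝ] ℝ).integrable_comp (hint i)

lemma integral_cube_inner_gradient_eq_neg {ψ c : Eu n → ℝ} (hψp : IsUnitPeriodic ψ)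
    (hψ : ContDiff ℝ 1 ψ) (hcp : IsUnitPeriodic c) (hc : ContDiff ℝ 2 c) :
    ∫ x in cube n, ⟪gradient ψ x, gradient c x⟫ = -∫ x in cube n, ψ x * lap c x := by
  have hgc : ContDiff ℝ 1 (gradient c) := hc.gradient (k := 1)
  have hF := hψp.smul hcp.gradient
  obtain ⟨K, hK⟩ := hF.exists_lipschitzWith (hψ.smul hgc)
  have hdiv := integral_cube_divg_eq_zero hF hK
  rw [eq_neg_iff_add_eq_zero, ← integral_add, ← hdiv]
  · refine setIntegral_congr_fun measurableSet_cube fun x _ => ?_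
    rw [divg_smul (hψ.differentiable one_ne_zero x) (hgc.differentiable one_ne_zero x),
      lap_eq_divg_gradient, inner_gradient_left]
  · exact Continuous.integrableOn_cube <|
      (hψ.gradient (k := 0)).continuous.inner hgc.continuous
  · rw [lap_eq_divg_gradient]
    exact Continuous.integrableOn_cube <| hψ.continuous.mul (continuous_divg hgc)

variable {u : Eu n → Eu n} {K : NNReal}

lemma integral_cube_fderiv_apply_eq_zero_of_divg_eq_zero (hup : IsUnitPeriodic u)
    (hulip : LipschitzWith K u) (hudiv : ∀ x, divg u x = 0) {h : Eu n → ℝ}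
    (hhp : IsUnitPeriodic h) (hh : ContDiff ℝ 1 h) :
    ∫ x in cube n, fderiv ℝ h x (u x) = 0 := by
  obtain ⟨Kh, hKh⟩ := hhp.exists_lipschitzWith hh
  obtain ⟨Ch, hCh⟩ := hhp.exists_bound hh.continuous
  obtain ⟨Cu, hCu⟩ := hup.exists_bound hulip.continuous
  rw [← integral_cube_divg_eq_zero (hhp.smul hup) (hKh.smul_of_bounded hulip hCh hCu)]
  refine integral_congr_ae (ae_restrict_of_ae ?_)
  filter_upwards [hulip.ae_differentiableAt] with x hx
  rw [divg_smul (hh.differentiable one_ne_zero x) hx, hudiv, mul_zero, add_zero]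

lemma integral_cube_mul_fderiv_apply_eq_neg (hup : IsUnitPeriodic u)
    (hulip : LipschitzWith K u) (hudiv : ∀ x, divg u x = 0) {f g : Eu n → ℝ}
    (hfp : IsUnitPeriodic f) (hf : ContDiff ℝ 1 f) (hgp : IsUnitPeriodic g) (hg : ContDiff ℝ 1 g) :
    ∫ x in cube n, f x * fderiv ℝ g x (u x) = -∫ x in cube n, g x * fderiv ℝ f x (u x) := by
  have hu := hulip.continuous
  have hf' := hf.continuous_fderiv one_ne_zero
  have hg' := hg.continuous_fderiv one_ne_zero
  have hfd := hf.differentiable one_ne_zero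
  have hgd := hg.differentiable one_ne_zero
  rw [eq_neg_iff_add_eq_zero, ← integral_add,
    ← integral_cube_fderiv_apply_eq_zero_of_divg_eq_zero hup hulip hudiv (hfp.mul hgp) (hf.mul hg)]
  · refine setIntegral_congr_fun measurableSet_cube fun x _ => ?_
    simp [fderiv_fun_mul (hfd x) (hgd x)]
  all_goals exact Continuous.integrableOn_cube (by fun_prop)

end Torus

lemma integral_norm_sq_le_of_integral_norm_sq_eq_inner {α F : Type*} [MeasurableSpace α]
    {μ : Measure α} [NormedAddCommGroup F] [InnerProductSpace ℝ F] {f g : α → F}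
    (hf : Integrable (fun x => ‖f x‖ ^ 2) μ) (hg : Integrable (fun x => ‖g x‖ ^ 2) μ)
    (hfg : Integrable (fun x => ⟪f x, g x⟫) μ) (h : ∫ x, ‖g x‖ ^ 2 ∂μ = ∫ x, ⟪f x, g x⟫ ∂μ) :
    ∫ x, ‖g x‖ ^ 2 ∂μ ≤ ∫ x, ‖f x‖ ^ 2 ∂μ := by
  have hle : ∫ x, ⟪f x, g x⟫ ∂μ ≤ ∫ x, (‖f x‖ ^ 2 / 2 + ‖g x‖ ^ 2 / 2) ∂μ :=
    integral_mono hfg ((hf.div_const 2).add (hg.div_const 2)) fun x => by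
      nlinarith [real_inner_le_norm (f x) (g x), sq_nonneg (‖f x‖ - ‖g x‖)]
  rw [integral_add (hf.div_const 2) (hg.div_const 2), integral_div, integral_div] at hle
  linarith

lemma integral_cube_norm_gradient_sq_le_of_cell_problem {n : ℕ} {u : Eu n → Eu n} {K : NNReal}
    (hup : IsUnitPeriodic u) (hulip : LipschitzWith K u) (hudiv : ∀ x, divg u x = 0)
    {χ φ : Eu n → ℝ} {A : ℝ} (hχp : IsUnitPeriodic χ) (hχ : ContDiff ℝ 2 χ)
    (hφp : IsUnitPeriodic φ) (hφ : ContDiff ℝ 1 φ)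
    (hcell : ∀ x, -lap χ x + A * ⟪u x, gradient χ x⟫ = A * ⟪u x, gradient φ x⟫) :
    ∫ x in cube n, ‖gradient χ x‖ ^ 2 ≤ ∫ x in cube n, ‖gradient φ x‖ ^ 2 := by
  have hχ1 : ContDiff ℝ 1 χ := hχ.of_le one_le_two
  let T (f g : Eu n → ℝ) : ℝ := ∫ x in cube n, f x * fderiv ℝ g x (u x)
  have hT_antisymm {f g} (hfp : IsUnitPeriodic f) (hf : ContDiff ℝ 1 f)
      (hgp : IsUnitPeriodic g) (hg : ContDiff ℝ 1 g) : T f g = -T g f :=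
    integral_cube_mul_fderiv_apply_eq_neg hup hulip hudiv hfp hf hgp hg
  have hlap {ψ} (hψ : ContDiff ℝ 1 ψ) : ∫ x in cube n, ψ x * lap χ x = A * (T ψ χ - T ψ φ) := by
    have hu := hulip.continuous
    have hψ' := hψ.continuous
    have hχ' := hχ1.continuous_fderiv one_ne_zero
    have hφ' := hφ.continuous_fderiv one_ne_zero
    rw [mul_sub, ← integral_const_mul, ← integral_const_mul, ← integral_sub]
    · refine setIntegral_congr_fun measurableSet_cube fun x _ => ?_
      have := hcell x
      simp only [real_inner_comm _ (u x), inner_gradient_left] at this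
      linear_combination (-ψ x) * this
    all_goals exact Continuous.integrableOn_cube (by fun_prop)
  have energy : ∫ x in cube n, ‖gradient χ x‖ ^ 2 =
      ∫ x in cube n, ⟪gradient φ x, gradient χ x⟫ := by
    have hχχ := integral_cube_inner_gradient_eq_neg hχp hχ1 hχp hχ
    simp only [real_inner_self_eq_norm_sq] at hχχ
    have hχ0 : T χ χ = 0 := by linarith [hT_antisymm hχp hχ1 hχp hχ1]
    have hφ0 : T φ φ = 0 := by linarith [hT_antisymm hφp hφ hφp hφ]
    rw [hχχ, integral_cube_inner_gradient_eq_neg hφp hφ hχp hχ, hlap hχ1, hlap hφ,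
      hT_antisymm hφp hφ hχp hχ1, hχ0, hφ0]
    ring
  have hgχ := (hχ.gradient (k := 1)).continuous
  have hgφ := (hφ.gradient (k := 0)).continuous
  exact integral_norm_sq_le_of_integral_norm_sq_eq_inner
    (Continuous.integrableOn_cube (by fun_prop)) (Continuous.integrableOn_cube (by fun_prop))
    (Continuous.integrableOn_cube (by fun_prop)) energy

theorem stmt1_general {n : ℕ} (u : EuclideanSpace ℝ (Fin n) → EuclideanSpace ℝ (Fin n))
    (e : EuclideanSpace ℝ (Fin n)) (K : NNReal) (hulip : LipschitzWith K u)
    (huper : ∀ x i, u (x + EuclideanSpace.single i 1) = u x)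
    (hudiv : ∀ x, divg u x = 0)
    (χ : ℝ → EuclideanSpace ℝ (Fin n) → ℝ)
    (hχ : ∀ A, ContDiff ℝ 2 (χ A))
    (hχper : ∀ A x i, χ A (x + EuclideanSpace.single i 1) = χ A x)
    (hχeq : ∀ A x, -lap (χ A) x + A * ⟪u x, gradient (χ A) x⟫ = A * ⟪u x, e⟫)
    (D : ℝ → ℝ)
    (hD : ∀ A, D A = 1 + ∫ x in cube n, ‖gradient (χ A) x‖ ^ 2)
    (φ : EuclideanSpace ℝ (Fin n) → ℝ) (hφ : ContDiff ℝ 1 φ)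
    (hφper : ∀ x i, φ (x + EuclideanSpace.single i 1) = φ x)
    (hφeq : ∀ x, ⟪u x, gradient φ x⟫ = ⟪u x, e⟫) :
    (∀ A : ℝ, D A ≤ 1 + 4 * ∫ x in cube n, ‖gradient φ x‖ ^ 2) ∧
      BddAbove (Set.range D) := by
  have hle (A : ℝ) : D A ≤ 1 + 4 * ∫ x in cube n, ‖gradient φ x‖ ^ 2 := by
    have hbound := integral_cube_norm_gradient_sq_le_of_cell_problem huper hulip hudiv
      (hχper A) (hχ A) hφper hφ fun x => (hχeq A x).trans (by rw [hφeq])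
    have hnonneg : 0 ≤ ∫ x in cube n, ‖gradient φ x‖ ^ 2 := integral_nonneg fun _ => by positivity
    rw [hD A]
    linarith
  exact ⟨hle, ⟨_, Set.forall_mem_range.2 hle⟩⟩

/-- If for each `A` the mean-zero periodic solution `χ A` of the cell problem
`-Δχ + A u·∇χ = A u·e` defines the effective diffusivity `D A = 1 + ∫ |∇χ|²`, and
`u·∇φ = u·e` admits a mean-zero periodic solution `φ`, then
`D A ≤ 1 + 4‖∇φ‖²` for all `A`; in particular `D` is bounded above. -/
theorem stmt1 {n : ℕ} (u : EuclideanSpace ℝ (Fin n) → EuclideanSpace ℝ (Fin n))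
    (e : EuclideanSpace ℝ (Fin n)) (he : ‖e‖ = 1) (K : NNReal) (hulip : LipschitzWith K u)
    (huper : ∀ x i, u (x + EuclideanSpace.single i 1) = u x)
    (hudiv : ∀ x, divg u x = 0)
    (humean : ∫ x in cube n, u x = 0)
    (χ : ℝ → EuclideanSpace ℝ (Fin n) → ℝ)
    (hχ : ∀ A, ContDiff ℝ 2 (χ A))
    (hχper : ∀ A x i, χ A (x + EuclideanSpace.single i 1) = χ A x)
    (hχmean : ∀ A, ∫ x in cube n, χ A x = 0)
    (hχeq : ∀ A x, -lap (χ A) x + A * ⟪u x, gradient (χ A) x⟫ = A * ⟪u x, e⟫)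
    (D : ℝ → ℝ)
    (hD : ∀ A, D A = 1 + ∫ x in cube n, ‖gradient (χ A) x‖ ^ 2)
    (φ : EuclideanSpace ℝ (Fin n) → ℝ) (hφ : ContDiff ℝ 1 φ)
    (hφper : ∀ x i, φ (x + EuclideanSpace.single i 1) = φ x)
    (hφmean : ∫ x in cube n, φ x = 0)
    (hφeq : ∀ x, ⟪u x, gradient φ x⟫ = ⟪u x, e⟫) :
    (∀ A : ℝ, D A ≤ 1 + 4 * ∫ x in cube n, ‖gradient φ x‖ ^ 2) ∧
      BddAbove (Set.range D) :=
  stmt1_general u e K hulip huper hudiv χ hχ hχper hχeq D hD φ hφ hφper hφeq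
end
end

section
/- Let κ(λ) be the principal eigenvalue of the operator φ ↦ φ'' + λα(x₂)φ on the circle T, where α is continuous, mean-zero, and not identically zero. Then κ(λ) ≤ λ‖α₊‖_∞ for all λ > 0, and lim_{λ→∞} κ(λ)/λ = ‖α₊‖_∞, where α₊ = max(α,0). -/
open MeasureTheory Real Filter intervalIntegral

noncomputable section

lemma hasDerivAt_maxsq (x : ℝ) :
    HasDerivAt (fun x : ℝ => (max x 0) ^ 2) (2 * max x 0) x := by
  rcases lt_trichotomy x 0 with hx | rfl | hx
  · have heq : (fun y : ℝ => (max y 0) ^ 2) =ᶠ[nhds x] fun _ => (0 : ℝ) := by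
      filter_upwards [isOpen_Iio.eventually_mem hx] with y (hy : y < 0)
      simp [max_eq_right hy.le]
    have h0 : HasDerivAt (fun _ : ℝ => (0 : ℝ)) 0 x := hasDerivAt_const x 0
    have := h0.congr_of_eventuallyEq heq
    simpa [max_eq_right hx.le] using this
  · rw [hasDerivAt_iff_isLittleO]
    simp only [max_self, mul_zero, smul_zero, sub_zero, ne_eq, max_eq_right le_rfl,
      zero_pow, OfNat.ofNat_ne_zero, not_false_eq_true]
    rw [Asymptotics.isLittleO_iff]
    intro c hc
    filter_upwards [Metric.ball_mem_nhds (0 : ℝ) hc] with y hy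
    rw [Metric.mem_ball, Real.dist_eq, sub_zero] at hy
    have h1 : (max y 0) ^ 2 ≤ |y| ^ 2 := by
      apply pow_le_pow_left₀ (le_max_right _ _)
      exact max_le (le_abs_self y) (abs_nonneg y)
    have h2 : |y| ^ 2 ≤ c * |y| := by
      rw [sq]
      exact mul_le_mul_of_nonneg_right hy.le (abs_nonneg y)
    rw [Real.norm_eq_abs, Real.norm_eq_abs, abs_of_nonneg (by positivity : (0:ℝ) ≤ (max y 0) ^ 2)]
    exact h1.trans h2
  · have heq : (fun y : ℝ => (max y 0) ^ 2) =ᶠ[nhds x] fun y => y ^ 2 := by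
      filter_upwards [isOpen_Ioi.eventually_mem hx] with y (hy : 0 < y)
      simp [max_eq_left hy.le]
    have h0 : HasDerivAt (fun y : ℝ => y ^ 2) (2 * x) x := by
      simpa using hasDerivAt_pow 2 x
    have := h0.congr_of_eventuallyEq heq
    simpa [max_eq_left hx.le] using this

lemma contDiff_maxsq : ContDiff ℝ 1 (fun x : ℝ => (max x 0) ^ 2) := by
  rw [contDiff_one_iff_deriv]
  constructor
  · exact fun x => (hasDerivAt_maxsq x).differentiableAt
  · have hd : deriv (fun x : ℝ => (max x 0) ^ 2) = fun x => 2 * max x 0 :=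
      funext fun x => (hasDerivAt_maxsq x).deriv
    rw [hd]
    exact continuous_const.mul (continuous_id.max continuous_const)

/-- Let `κ(λ)` be the principal eigenvalue of `φ ↦ φ'' + λαφ` on the circle, given by the
Rayleigh quotient `κ(λ) = sup {λ∫αφ² − ∫|φ'|² : ‖φ‖₂ = 1}`, with `α` continuous, periodic,
mean-zero and not identically zero. Then `κ(λ) ≤ λ‖α₊‖_∞` for all `λ > 0`, and
`κ(λ)/λ → ‖α₊‖_∞` as `λ → ∞`. -/
theorem stmt13 (α : ℝ → ℝ) (hαc : Continuous α) (hαper : ∀ t, α (t + 1) = α t)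
    (hαmean : ∫ t in (0 : ℝ)..1, α t = 0) (hαne : ∃ t, α t ≠ 0)
    (κ : ℝ → ℝ)
    (hκ : ∀ l : ℝ, κ l = sSup {r : ℝ | ∃ φ : ℝ → ℝ, ContDiff ℝ 1 φ ∧
      (∀ t, φ (t + 1) = φ t) ∧ (∫ t in (0 : ℝ)..1, (φ t) ^ 2) = 1 ∧
      r = l * (∫ t in (0 : ℝ)..1, α t * (φ t) ^ 2) - ∫ t in (0 : ℝ)..1, (deriv φ t) ^ 2}) :
    (∀ l : ℝ, 0 < l → κ l ≤ l * sSup (Set.range fun t => max (α t) 0)) ∧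
      Tendsto (fun l => κ l / l) atTop (nhds (sSup (Set.range fun t => max (α t) 0))) := by
  set M := sSup (Set.range fun t => max (α t) 0) with hMdef
  have hper : Function.Periodic α 1 := hαper
  -- periodic value identity via fractional part
  have hval : ∀ t : ℝ, α (Int.fract t) = α t := by
    intro t
    have h := hper.sub_int_mul_eq (x := t) ⌊t⌋
    rw [mul_one] at h
    exact h
  -- maximum of α₊ on [0,1]
  obtain ⟨t₀, ht₀mem, ht₀max⟩ :=
    isCompact_Icc.exists_isMaxOn (Set.nonempty_Icc.2 zero_le_one)
      ((hαc.max continuous_const).continuousOn (s := Set.Icc (0:ℝ) 1))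
  have hub : ∀ t : ℝ, max (α t) 0 ≤ max (α t₀) 0 := by
    intro t
    have h1 : Int.fract t ∈ Set.Icc (0:ℝ) 1 :=
      ⟨Int.fract_nonneg t, (Int.fract_lt_one t).le⟩
    calc max (α t) 0 = max (α (Int.fract t)) 0 := by rw [hval]
      _ ≤ max (α t₀) 0 := ht₀max h1
  have hbddR : BddAbove (Set.range fun t => max (α t) 0) :=
    ⟨max (α t₀) 0, by rintro y ⟨t, rfl⟩; exact hub t⟩
  have hMt₀ : M = max (α t₀) 0 :=
    le_antisymm (csSup_le (Set.range_nonempty _) (by rintro y ⟨t, rfl⟩; exact hub t))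
      (le_csSup hbddR ⟨t₀, rfl⟩)
  -- α takes a positive value
  have hexpos : ∃ t, 0 < α t := by
    by_contra hcon
    push_neg at hcon
    obtain ⟨t₁, ht₁⟩ := hαne
    have ht₁' : α t₁ < 0 := lt_of_le_of_ne (hcon t₁) ht₁
    have hs : α (Int.fract t₁) < 0 := by rw [hval]; exact ht₁'
    have hsmem : 0 ≤ Int.fract t₁ ∧ Int.fract t₁ < 1 := ⟨Int.fract_nonneg _, Int.fract_lt_one _⟩
    have hopen : IsOpen {x : ℝ | α x < 0} := isOpen_lt hαc continuous_const
    obtain ⟨s', hs'1, hs'2, hs'neg⟩ : ∃ s', 0 < s' ∧ s' < 1 ∧ α s' < 0 := by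
      rcases eq_or_lt_of_le hsmem.1 with h0 | h0
      · obtain ⟨ε, hε, hball⟩ := Metric.isOpen_iff.1 hopen _ hs
        refine ⟨min (ε/2) (1/2), by positivity,
          lt_of_le_of_lt (min_le_right _ _) (by norm_num), ?_⟩
        have : min (ε/2) (1/2) ∈ Metric.ball (Int.fract t₁) ε := by
          rw [Metric.mem_ball, Real.dist_eq, ← h0, sub_zero,
            abs_of_pos (by positivity : (0:ℝ) < min (ε/2) (1/2))]
          exact lt_of_le_of_lt (min_le_left _ _) (by linarith)
        exact hball this
      · exact ⟨_, h0, hsmem.2, hs⟩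
    obtain ⟨ε, hε, hball⟩ := Metric.isOpen_iff.1 hopen s' hs'neg
    set m := min (ε/2) (min s' (1 - s')) with hm
    have hm0 : 0 < m := lt_min (by positivity) (lt_min hs'1 (by linarith))
    have hms' : m ≤ s' := le_trans (min_le_right _ _) (min_le_left _ _)
    have hm1 : m ≤ 1 - s' := le_trans (min_le_right _ _) (min_le_right _ _)
    have hmε : m ≤ ε / 2 := min_le_left _ _
    have huv : ∀ x ∈ Set.Ioo (s' - m/2) (s' + m/2), 0 < -α x := by
      intro x hx
      have hxball : x ∈ Metric.ball s' ε := by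
        rw [Metric.mem_ball, Real.dist_eq, abs_lt]
        constructor <;> [linarith [hx.1]; linarith [hx.2]]
      have h5 : α x < 0 := hball hxball
      linarith
    have hint : ∀ a b : ℝ, IntervalIntegrable (fun x => -α x) volume a b :=
      fun a b => (hαc.neg).intervalIntegrable a b
    have hI : 0 < ∫ x in (s' - m/2)..(s' + m/2), -α x :=
      intervalIntegral_pos_of_pos_on (hint _ _) huv (by linarith)
    have e1 : (∫ x in (0:ℝ)..(s' - m/2), -α x) + ∫ x in (s' - m/2)..(s' + m/2), -α x
        = ∫ x in (0:ℝ)..(s' + m/2), -α x :=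
      integral_add_adjacent_intervals (hint _ _) (hint _ _)
    have e2 : (∫ x in (0:ℝ)..(s' + m/2), -α x) + ∫ x in (s' + m/2)..1, -α x
        = ∫ x in (0:ℝ)..1, -α x :=
      integral_add_adjacent_intervals (hint _ _) (hint _ _)
    have n1 : 0 ≤ ∫ x in (0:ℝ)..(s' - m/2), -α x :=
      intervalIntegral.integral_nonneg (by linarith) (fun u _ => neg_nonneg.2 (hcon u))
    have n2 : 0 ≤ ∫ x in (s' + m/2)..1, -α x :=
      intervalIntegral.integral_nonneg (by linarith) (fun u _ => neg_nonneg.2 (hcon u))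
    have hmean' : ∫ x in (0:ℝ)..1, -α x = 0 := by
      rw [intervalIntegral.integral_neg, hαmean, neg_zero]
    linarith
  obtain ⟨tp, htp⟩ := hexpos
  have hMpos : 0 < M := htp.trans_le ((le_max_left _ _).trans ((hub tp).trans hMt₀.ge))
  have hαt₀ : α t₀ = M := by
    rcases le_or_gt (α t₀) 0 with h | h
    · exfalso; rw [hMt₀, max_eq_right h] at hMpos; exact lt_irrefl 0 hMpos
    · rw [hMt₀, max_eq_left h.le]
  have hαle : ∀ t, α t ≤ M := fun t => (le_max_left _ _).trans ((hub t).trans hMt₀.ge)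
  -- the Rayleigh set
  set S : ℝ → Set ℝ := fun l => {r : ℝ | ∃ φ : ℝ → ℝ, ContDiff ℝ 1 φ ∧
      (∀ t, φ (t + 1) = φ t) ∧ (∫ t in (0 : ℝ)..1, (φ t) ^ 2) = 1 ∧
      r = l * (∫ t in (0 : ℝ)..1, α t * (φ t) ^ 2) - ∫ t in (0 : ℝ)..1, (deriv φ t) ^ 2}
    with hSdef
  have hκ' : ∀ l : ℝ, κ l = sSup (S l) := hκ
  have hmem_le : ∀ l : ℝ, 0 ≤ l → ∀ r ∈ S l, r ≤ l * M := by
    rintro l hl r ⟨φ, hφ1, -, hφn, rfl⟩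
    have hφc : Continuous φ := hφ1.continuous
    have h1 : (∫ t in (0:ℝ)..1, α t * φ t ^ 2) ≤ ∫ t in (0:ℝ)..1, M * φ t ^ 2 := by
      apply intervalIntegral.integral_mono_on zero_le_one
        ((hαc.mul (hφc.pow 2)).intervalIntegrable _ _)
        ((continuous_const.mul (hφc.pow 2)).intervalIntegrable _ _)
      intro x _
      exact mul_le_mul_of_nonneg_right (hαle x) (sq_nonneg _)
    rw [intervalIntegral.integral_const_mul, hφn, mul_one] at h1
    have h3 : 0 ≤ ∫ t in (0:ℝ)..1, (deriv φ t) ^ 2 :=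
      intervalIntegral.integral_nonneg zero_le_one (fun u _ => sq_nonneg _)
    have h4 := mul_le_mul_of_nonneg_left h1 hl
    linarith
  have hzero : ∀ l : ℝ, (0:ℝ) ∈ S l := by
    intro l
    refine ⟨fun _ => 1, contDiff_const, fun t => rfl, by norm_num, ?_⟩
    simp [hαmean]
  have hbdd : ∀ l : ℝ, 0 ≤ l → BddAbove (S l) :=
    fun l hl => ⟨l * M, fun r hr => hmem_le l hl r hr⟩
  have hκle : ∀ l : ℝ, 0 ≤ l → κ l ≤ l * M := fun l hl => by
    rw [hκ' l]; exact csSup_le ⟨0, hzero l⟩ (fun r hr => hmem_le l hl r hr)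
  -- the key lower bound via a concentrated test function
  have key : ∀ ε : ℝ, 0 < ε → ∃ A C : ℝ, M - ε ≤ A ∧ 0 ≤ C ∧
      ∀ l : ℝ, 0 ≤ l → l * A - C ≤ κ l := by
    intro ε hε
    obtain ⟨δ₀, hδ₀, hδ₀p⟩ : ∃ δ₀ > 0, ∀ t : ℝ, |t - t₀| < δ₀ → M - ε < α t := by
      obtain ⟨δ₀, hδ₀, h⟩ := Metric.continuousAt_iff.1 hαc.continuousAt ε hε
      refine ⟨δ₀, hδ₀, fun t ht => ?_⟩
      have h2 := h (show dist t t₀ < δ₀ by rwa [Real.dist_eq])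
      rw [Real.dist_eq, hαt₀] at h2
      have := abs_lt.1 h2
      linarith [this.1]
    set δ := min δ₀ (1/2) with hδdef
    have hδpos : 0 < δ := lt_min hδ₀ (by norm_num)
    have hδle : δ ≤ 1/2 := min_le_right _ _
    have hδp : ∀ t : ℝ, |t - t₀| < δ → M - ε < α t :=
      fun t ht => hδ₀p t (lt_of_lt_of_le ht (min_le_left _ _))
    set c := Real.cos (2*π*δ) with hcdef
    set b : ℝ → ℝ := fun t => max (Real.cos (2*π*(t - t₀)) - c) 0 with hbdef
    set φ₀ : ℝ → ℝ := fun t => (b t) ^ 2 with hφ₀def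
    have hgc : ContDiff ℝ 1 (fun t : ℝ => Real.cos (2*π*(t - t₀)) - c) :=
      ((Real.contDiff_cos.comp ((contDiff_const.mul (contDiff_id.sub contDiff_const)) :
        ContDiff ℝ 1 fun t : ℝ => 2*π*(t - t₀))).sub contDiff_const)
    have hφ₀cd : ContDiff ℝ 1 φ₀ := contDiff_maxsq.comp hgc
    have hφ₀c : Continuous φ₀ := hφ₀cd.continuous
    have hcosper : ∀ t : ℝ, Real.cos (2*π*(t + 1 - t₀)) = Real.cos (2*π*(t - t₀)) := by
      intro t
      rw [show 2*π*(t + 1 - t₀) = 2*π*(t - t₀) + 2*π by ring, Real.cos_add_two_pi]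
    have hφ₀per : ∀ t, φ₀ (t + 1) = φ₀ t := by
      intro t
      simp only [hφ₀def, hbdef, hcosper t]
    have hcos_eq : ∀ t : ℝ, Real.cos (2*π*(t - t₀)) = Real.cos (2*π*|t - t₀|) := by
      intro t
      rw [show 2*π*|t - t₀| = |2*π*(t - t₀)| by
        rw [abs_mul, abs_of_pos (by positivity : (0:ℝ) < 2*π)], Real.cos_abs]
    -- support property
    have hsupport : ∀ t : ℝ, |t - t₀| ≤ 1/2 → b t ≠ 0 → M - ε < α t := by
      intro t ht hbt
      apply hδp
      by_contra hge
      push_neg at hge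
      have h1 : Real.cos (2*π*|t - t₀|) ≤ c := by
        rw [hcdef]
        apply Real.cos_le_cos_of_nonneg_of_le_pi (by positivity)
        · nlinarith [Real.pi_pos]
        · nlinarith [Real.pi_pos]
      have h2 : b t = 0 := by
        simp only [hbdef]
        rw [hcos_eq t]
        exact max_eq_right (by linarith)
      exact hbt h2
    -- positivity near t₀
    have hposin : ∀ t ∈ Set.Ioo (t₀ - δ) (t₀ + δ), 0 < (φ₀ t) ^ 2 := by
      intro t ht
      have habs : |t - t₀| < δ := by rw [abs_lt]; constructor <;> [linarith [ht.1]; linarith [ht.2]]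
      have h1 : c < Real.cos (2*π*|t - t₀|) := by
        rw [hcdef]
        apply Real.cos_lt_cos_of_nonneg_of_le_pi (by positivity)
        · nlinarith [Real.pi_pos]
        · nlinarith [Real.pi_pos]
      have h2 : 0 < b t := by
        simp only [hbdef]
        rw [hcos_eq t]
        exact lt_max_of_lt_left (by linarith)
      positivity
    -- shifting integrals
    have hshift : ∀ f : ℝ → ℝ, Function.Periodic f 1 →
        (∫ t in (0:ℝ)..1, f t) = ∫ t in (t₀ - 1/2)..(t₀ - 1/2 + 1), f t := by
      intro f hf
      simpa using hf.intervalIntegral_add_eq 0 (t₀ - 1/2)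
    set J := ∫ t in (0:ℝ)..1, (φ₀ t) ^ 2 with hJdef
    have hφ₀sq_per : Function.Periodic (fun t => (φ₀ t) ^ 2) 1 := fun t => by simp only [hφ₀per t]
    have hJeq : J = ∫ t in (t₀ - 1/2)..(t₀ - 1/2 + 1), (φ₀ t) ^ 2 := hshift _ hφ₀sq_per
    have hintsq : ∀ a b : ℝ, IntervalIntegrable (fun t => (φ₀ t) ^ 2) volume a b :=
      fun a b => (hφ₀c.pow 2).intervalIntegrable a b
    have hJpos : 0 < J := by
      rw [hJeq]
      have h2 : 0 < ∫ t in (t₀ - δ)..(t₀ + δ), (φ₀ t) ^ 2 :=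
        intervalIntegral_pos_of_pos_on (hintsq _ _) hposin (by linarith)
      have e1 : (∫ t in (t₀ - 1/2)..(t₀ - δ), (φ₀ t) ^ 2) + ∫ t in (t₀ - δ)..(t₀ + δ), (φ₀ t) ^ 2
          = ∫ t in (t₀ - 1/2)..(t₀ + δ), (φ₀ t) ^ 2 :=
        integral_add_adjacent_intervals (hintsq _ _) (hintsq _ _)
      have e2 : (∫ t in (t₀ - 1/2)..(t₀ + δ), (φ₀ t) ^ 2)
            + ∫ t in (t₀ + δ)..(t₀ - 1/2 + 1), (φ₀ t) ^ 2
          = ∫ t in (t₀ - 1/2)..(t₀ - 1/2 + 1), (φ₀ t) ^ 2 :=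
        integral_add_adjacent_intervals (hintsq _ _) (hintsq _ _)
      have n1 : 0 ≤ ∫ t in (t₀ - 1/2)..(t₀ - δ), (φ₀ t) ^ 2 :=
        intervalIntegral.integral_nonneg (by linarith) (fun u _ => sq_nonneg _)
      have n2 : 0 ≤ ∫ t in (t₀ + δ)..(t₀ - 1/2 + 1), (φ₀ t) ^ 2 :=
        intervalIntegral.integral_nonneg (by linarith) (fun u _ => sq_nonneg _)
      linarith
    -- the normalized test function
    set ψ : ℝ → ℝ := fun t => (Real.sqrt J)⁻¹ * φ₀ t with hψdef
    have hψsq : ∀ t, (ψ t) ^ 2 = J⁻¹ * (φ₀ t) ^ 2 := by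
      intro t
      simp only [hψdef]
      rw [mul_pow, inv_pow, Real.sq_sqrt hJpos.le]
    have hψnorm : (∫ t in (0:ℝ)..1, (ψ t) ^ 2) = 1 := by
      simp_rw [hψsq]
      rw [intervalIntegral.integral_const_mul]
      exact inv_mul_cancel₀ hJpos.ne'
    -- lower bound for ∫ α ψ²
    have hmono : (∫ t in (t₀ - 1/2)..(t₀ - 1/2 + 1), (M - ε) * (φ₀ t) ^ 2)
        ≤ ∫ t in (t₀ - 1/2)..(t₀ - 1/2 + 1), α t * (φ₀ t) ^ 2 := by
      apply intervalIntegral.integral_mono_on (by linarith)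
        ((continuous_const.mul (hφ₀c.pow 2)).intervalIntegrable _ _)
        ((hαc.mul (hφ₀c.pow 2)).intervalIntegrable _ _)
      intro t ht
      by_cases hbt : b t = 0
      · have : φ₀ t = 0 := by rw [hφ₀def]; simp [hbt]
        simp [this]
      · have habs : |t - t₀| ≤ 1/2 := by
          rw [abs_le]; constructor <;> [linarith [ht.1]; linarith [ht.2]]
        exact mul_le_mul_of_nonneg_right (hsupport t habs hbt).le (sq_nonneg _)
    have hαφper : Function.Periodic (fun t => α t * (φ₀ t) ^ 2) 1 := fun t => by
      simp only [hφ₀per t, hαper t]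
    have hlhs : (∫ t in (t₀ - 1/2)..(t₀ - 1/2 + 1), (M - ε) * (φ₀ t) ^ 2) = (M - ε) * J := by
      rw [intervalIntegral.integral_const_mul, ← hJeq]
    have hrhs : (∫ t in (t₀ - 1/2)..(t₀ - 1/2 + 1), α t * (φ₀ t) ^ 2)
        = ∫ t in (0:ℝ)..1, α t * (φ₀ t) ^ 2 := (hshift _ hαφper).symm
    have hAint : (M - ε) * J ≤ ∫ t in (0:ℝ)..1, α t * (φ₀ t) ^ 2 := by
      rw [← hrhs, ← hlhs]; exact hmono
    set A := ∫ t in (0:ℝ)..1, α t * (ψ t) ^ 2 with hAdef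
    have hA : M - ε ≤ A := by
      have hAeq : A = J⁻¹ * ∫ t in (0:ℝ)..1, α t * (φ₀ t) ^ 2 := by
        rw [hAdef]
        have hintg : ∀ t, α t * (ψ t) ^ 2 = J⁻¹ * (α t * (φ₀ t) ^ 2) := fun t => by
          rw [hψsq]; ring
        simp_rw [hintg]
        rw [intervalIntegral.integral_const_mul]
      rw [hAeq]
      have := mul_le_mul_of_nonneg_left hAint (inv_nonneg.2 hJpos.le)
      rw [mul_comm (M - ε) J, ← mul_assoc, inv_mul_cancel₀ hJpos.ne', one_mul] at this
      exact this
    set C := ∫ t in (0:ℝ)..1, (deriv ψ t) ^ 2 with hCdef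
    have hC : 0 ≤ C :=
      intervalIntegral.integral_nonneg zero_le_one (fun u _ => sq_nonneg _)
    refine ⟨A, C, hA, hC, fun l hl => ?_⟩
    have hmem : (l * A - C) ∈ S l :=
      ⟨ψ, contDiff_const.mul hφ₀cd, fun t => by simp only [hψdef, hφ₀per t], hψnorm, rfl⟩
    rw [hκ' l]
    exact le_csSup (hbdd l hl) hmem
  -- conclusion
  refine ⟨fun l hl => hκle l hl.le, ?_⟩
  refine tendsto_order.2 ⟨?_, ?_⟩
  · intro x hx
    have hεpos : 0 < (M - x) / 2 := by linarith
    obtain ⟨A, C, hA, hC, hbound⟩ := key _ hεpos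
    filter_upwards [eventually_ge_atTop (max 1 (2 * C / (M - x) + 1))] with l hl
    have hl1 : (1:ℝ) ≤ l := le_trans (le_max_left _ _) hl
    have hl0 : 0 < l := lt_of_lt_of_le one_pos hl1
    have hl2 : 2 * C / (M - x) + 1 ≤ l := le_trans (le_max_right _ _) hl
    have hκl : l * A - C ≤ κ l := hbound l hl0.le
    rw [lt_div_iff₀ hl0]
    have h3 : 2 * C / (M - x) < l := by linarith
    have h4 : 2 * C < l * (M - x) := by
      have := (div_lt_iff₀ (by linarith : (0:ℝ) < M - x)).1 h3
      linarith
    nlinarith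
  · intro x hx
    filter_upwards [eventually_gt_atTop (0:ℝ)] with l hl
    have h := hκle l hl.le
    rw [div_lt_iff₀ hl]
    nlinarith
end
end
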